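/- There are no u > 0 and k ∈ (0,1) satisfying simultaneously the two equations E(u,k)·cos u = √(1−k²sin²u)·sin u and F(u,k)·√(1−k²sin²u)·cos u = sin u. (Incompatibility of the system f₁(p,k) = 0, J = 0 after the substitution p = am(u,k); this lemma yields the upper bound 2p₁¹(k) on the first conjugate time.) -/

import Mathlib

/-!
At a solution, `E(u) = Δ(u) tan u` and `F(u) = tan u / Δ(u)` with `Δ = √(1 − k² sin²)`, so
`h(u) = E(u) − (1 − k²) F(u) − k² sin u cos u / Δ(u)` vanishes. Unlike `E − Δ tan` and
`F − tan / Δ`, the function `h` has no poles: it is smooth on `ℝ`, `h(0) = 0`, and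
`h' = (1 − k²) k² sin² / Δ³ ≥ 0` with zeros only at multiples of `π`.
Hence `h(u) > 0` for `u > 0`.
-/

open Real

/-- Incomplete elliptic integral of the first kind in Legendre form:
`F(u,k) = ∫₀ᵘ dφ/√(1 − k² sin² φ)`. -/
noncomputable def EllF (u k : ℝ) : ℝ :=
  ∫ φ in (0:ℝ)..u, 1 / Real.sqrt (1 - k ^ 2 * Real.sin φ ^ 2)

/-- Incomplete elliptic integral of the second kind in Legendre form:
`E(u,k) = ∫₀ᵘ √(1 − k² sin² φ) dφ`. -/
noncomputable def EllE (u k : ℝ) : ℝ :=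
  ∫ φ in (0:ℝ)..u, Real.sqrt (1 - k ^ 2 * Real.sin φ ^ 2)

noncomputable def deltaAmp (k t : ℝ) : ℝ := √(1 - k ^ 2 * sin t ^ 2)

noncomputable def ellipticDefect (u k : ℝ) : ℝ :=
  EllE u k - (1 - k ^ 2) * EllF u k - k ^ 2 * (sin u * cos u / deltaAmp k u)

section

variable {k : ℝ}

lemma one_sub_sq_mul_sin_sq_pos (hk : k ^ 2 < 1) (t : ℝ) : 0 < 1 - k ^ 2 * sin t ^ 2 := by
  nlinarith [sin_sq_le_one t, sq_nonneg (sin t), sq_nonneg k]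

lemma deltaAmp_pos (hk : k ^ 2 < 1) (t : ℝ) : 0 < deltaAmp k t :=
  sqrt_pos.mpr (one_sub_sq_mul_sin_sq_pos hk t)

lemma sq_deltaAmp (hk : k ^ 2 < 1) (t : ℝ) : deltaAmp k t ^ 2 = 1 - k ^ 2 * sin t ^ 2 :=
  sq_sqrt (one_sub_sq_mul_sin_sq_pos hk t).le

@[fun_prop]
lemma continuous_deltaAmp : Continuous (deltaAmp k) := by
  unfold deltaAmp; fun_prop

lemma hasDerivAt_deltaAmp (hk : k ^ 2 < 1) (t : ℝ) :
    HasDerivAt (deltaAmp k) (-(k ^ 2 * sin t * cos t) / deltaAmp k t) t := by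
  have h := ((((hasDerivAt_sin t).pow 2).const_mul (k ^ 2)).const_sub 1).sqrt
    (one_sub_sq_mul_sin_sq_pos hk t).ne'
  refine h.congr_deriv ?_
  simp only [deltaAmp, Pi.pow_apply]
  field_simp
  ring

lemma hasDerivAt_EllE (u : ℝ) : HasDerivAt (fun u => EllE u k) (deltaAmp k u) u :=
  (continuous_deltaAmp.integral_hasStrictDerivAt 0 u).hasDerivAt

lemma hasDerivAt_EllF (hk : k ^ 2 < 1) (u : ℝ) :
    HasDerivAt (fun u => EllF u k) (1 / deltaAmp k u) u :=
  ((continuous_const.div continuous_deltaAmp fun t =>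
    (deltaAmp_pos hk t).ne').integral_hasStrictDerivAt 0 u).hasDerivAt

lemma hasDerivAt_ellipticDefect (hk : k ^ 2 < 1) (u : ℝ) :
    HasDerivAt (fun u => ellipticDefect u k)
      ((1 - k ^ 2) * k ^ 2 * sin u ^ 2 / deltaAmp k u ^ 3) u := by
  have hΔ := (deltaAmp_pos hk u).ne'
  have h := ((hasDerivAt_EllE (k := k) u).sub ((hasDerivAt_EllF hk u).const_mul (1 - k ^ 2))).sub
    ((((hasDerivAt_sin u).mul (hasDerivAt_cos u)).div (hasDerivAt_deltaAmp hk u) hΔ).const_mul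
      (k ^ 2))
  refine h.congr_deriv ?_
  simp only [Pi.mul_apply]
  field_simp
  linear_combination (deltaAmp k u ^ 2 + (1 - k ^ 2 * sin u ^ 2) +
      (-1 + k ^ 2 - k ^ 2 * cos u ^ 2 + k ^ 2 * sin u ^ 2)) * sq_deltaAmp hk u -
    k ^ 2 * sin_sq_add_cos_sq u

lemma ellipticDefect_zero : ellipticDefect 0 k = 0 := by
  simp [ellipticDefect, EllE, EllF]

lemma ellipticDefect_pos (hk0 : k ≠ 0) (hk : k ^ 2 < 1) {u : ℝ} (hu : 0 < u) :
    0 < ellipticDefect u k := by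
  have hcont : Continuous fun t => (1 - k ^ 2) * k ^ 2 * sin t ^ 2 / deltaAmp k t ^ 3 := by
    fun_prop (disch := exact fun t => (pow_pos (deltaAmp_pos hk t) 3).ne')
  have hftc := intervalIntegral.integral_eq_sub_of_hasDerivAt
    (fun t _ => hasDerivAt_ellipticDefect hk t) (hcont.intervalIntegrable 0 u)
  rw [ellipticDefect_zero, sub_zero] at hftc
  rw [← hftc]
  have hk1 : 0 < 1 - k ^ 2 := by linarith
  have hk2 : 0 < k ^ 2 := by positivity
  refine intervalIntegral.integral_pos hu hcont.continuousOn
    (fun t _ => by have := deltaAmp_pos hk t; positivity) ⟨min u (π / 2), ?_, ?_⟩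
  · exact ⟨le_min hu.le (by positivity), min_le_left _ _⟩
  · have hsin : 0 < sin (min u (π / 2)) :=
      sin_pos_of_pos_of_lt_pi (lt_min hu (by positivity))
        ((min_le_right _ _).trans_lt (by linarith [pi_pos]))
    have := deltaAmp_pos hk (min u (π / 2))
    positivity

lemma ellipticDefect_eq_zero (hk : k ^ 2 < 1) {u : ℝ}
    (hE : EllE u k * cos u = deltaAmp k u * sin u)
    (hF : EllF u k * deltaAmp k u * cos u = sin u) : ellipticDefect u k = 0 := by
  have hΔ := (deltaAmp_pos hk u).ne'
  have hcos : cos u ≠ 0 := by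
    intro hc
    have hs : sin u = 0 := by simpa [hc, hΔ] using hE.symm
    simpa [hs, hc] using sin_sq_add_cos_sq u
  have hprod : deltaAmp k u * cos u * ellipticDefect u k = 0 := by
    unfold ellipticDefect
    field_simp
    linear_combination deltaAmp k u * hE - (1 - k ^ 2) * hF + sin u * sq_deltaAmp hk u -
      k ^ 2 * sin u * sin_sq_add_cos_sq u
  simpa [hΔ, hcos] using hprod

end

/-- There are no `u > 0` and `k ∈ (0,1)` satisfying simultaneously
`E(u,k)·cos u = √(1 − k² sin² u)·sin u` and
`F(u,k)·√(1 − k² sin² u)·cos u = sin u`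
(incompatibility of the system `f₁(p,k) = 0`, `J = 0` after the substitution `p = am(u,k)`). -/
theorem incompatibility (u k : ℝ) (hu : 0 < u) (hk : k ∈ Set.Ioo (0:ℝ) 1) :
    ¬ (EllE u k * Real.cos u = Real.sqrt (1 - k ^ 2 * Real.sin u ^ 2) * Real.sin u ∧
       EllF u k * Real.sqrt (1 - k ^ 2 * Real.sin u ^ 2) * Real.cos u = Real.sin u) := by
  rintro ⟨hE, hF⟩
  have hk2 : k ^ 2 < 1 := pow_lt_one₀ hk.1.le hk.2 two_ne_zero
  exact (ellipticDefect_pos hk.1.ne' hk2 hu).ne' (ellipticDefect_eq_zero hk2 hE hF)
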